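/- Let Γ be a crystallographic group with translation group T and point group Π, and let N be a normal subgroup of Γ. Then the group of translations of N (acting on Span(N)) is N ∩ T, the point group of N is isomorphic to Φ = {A ∈ Π : a+A ∈ N for some a}, and Φ is a normal subgroup of Π. -/

import Mathlib

noncomputable section

/-- Euclidean `n`-space. -/
abbrev E (n : ℕ) := EuclideanSpace ℝ (Fin n)

/-- An isometry `a + A` of `E n`, acting by `x ↦ a + A x`, with `A` a linear isometry
(an element of `O(n)`). -/
@[ext] structure Iso (n : ℕ) where
  a : E n
  A : E n ≃ₗᵢ[ℝ] E n

namespace Iso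

variable {n : ℕ}

instance : Mul (Iso n) := ⟨fun x y => ⟨x.a + x.A y.a, y.A.trans x.A⟩⟩
instance : One (Iso n) := ⟨⟨0, LinearIsometryEquiv.refl ℝ (E n)⟩⟩
instance : Inv (Iso n) := ⟨fun x => ⟨-(x.A.symm x.a), x.A.symm⟩⟩

@[simp] lemma mul_a (x y : Iso n) : (x * y).a = x.a + x.A y.a := rfl
@[simp] lemma mul_A (x y : Iso n) : (x * y).A = y.A.trans x.A := rfl
@[simp] lemma one_a : (1 : Iso n).a = 0 := rfl
@[simp] lemma one_A : (1 : Iso n).A = LinearIsometryEquiv.refl ℝ (E n) := rfl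
@[simp] lemma inv_a (x : Iso n) : (x⁻¹).a = -(x.A.symm x.a) := rfl
@[simp] lemma inv_A (x : Iso n) : (x⁻¹).A = x.A.symm := rfl

/-- The group of isometries of `E n`, with composition as multiplication. -/
instance : Group (Iso n) where
  mul_assoc x y z := by
    refine Iso.ext ?_ ?_
    · simp [add_assoc]
    · ext v; simp
  one_mul x := by refine Iso.ext ?_ ?_ <;> simp
  mul_one x := by refine Iso.ext ?_ ?_ <;> simp
  inv_mul_cancel x := by
    refine Iso.ext ?_ ?_
    · simp
    · ext v; simp

/-- The action of the isometry `a + A` on a point `x` of `E n`: `x ↦ a + A x`. -/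
def act (g : Iso n) (x : E n) : E n := g.a + g.A x

/-- The translation `a + I`. -/
def trans (a : E n) : Iso n := ⟨a, LinearIsometryEquiv.refl ℝ (E n)⟩

/-- `g` is a translation if its linear part is the identity. -/
def IsTranslation (g : Iso n) : Prop := g.A = LinearIsometryEquiv.refl ℝ (E n)

/-- The subgroup of all translations of `E n`. -/
def translations (n : ℕ) : Subgroup (Iso n) where
  carrier := {g | g.IsTranslation}
  mul_mem' := by
    intro x y hx hy
    simp only [Set.mem_setOf_eq, IsTranslation] at *
    rw [mul_A, hx, hy]; simp
  one_mem' := rfl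
  inv_mem' := by
    intro x hx
    simp only [Set.mem_setOf_eq, IsTranslation] at *
    rw [inv_A, hx]; rfl

/-- The set of translation vectors of a set `S` of isometries:
`{a : E n | a + I ∈ S}`. -/
def transVecs (S : Set (Iso n)) : Set (E n) := {a | Iso.trans a ∈ S}

/-- `Span(S)`: the real linear span of the translation vectors of `S`. -/
def spanS (S : Set (Iso n)) : Submodule ℝ (E n) :=
  Submodule.span ℝ (transVecs S)

/-- A crystallographic (space) group: a group of isometries of `E n` that acts
properly discontinuously (equivalently, is discrete) and cocompactly. -/
def IsCrystallographic (Γ : Subgroup (Iso n)) : Prop :=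
  (∀ K : Set (E n), IsCompact K →
      {g : Iso n | g ∈ Γ ∧ ((Iso.act g '' K) ∩ K).Nonempty}.Finite) ∧
  ∃ K : Set (E n), IsCompact K ∧ ∀ x : E n, ∃ g ∈ Γ, g.act x ∈ K

/-- `N` is a normal subgroup of `Γ`. -/
def IsNormalIn (N Γ : Subgroup (Iso n)) : Prop :=
  N ≤ Γ ∧ ∀ g ∈ Γ, ∀ x ∈ N, g * x * g⁻¹ ∈ N

/-- The completion of `S` in `Γ`:
`S̄ = {b+B ∈ Γ : b ∈ Span(S) and Span(S)ᗮ ⊆ Fix(B)}`. -/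
def completion (Γ : Subgroup (Iso n)) (S : Set (Iso n)) : Set (Iso n) :=
  {g | g ∈ Γ ∧ g.a ∈ spanS S ∧ ∀ x ∈ (spanS S)ᗮ, g.A x = x}

end Iso

namespace Iso

/-- The linear-part homomorphism `a + A ↦ A`. -/
def AHom (n : ℕ) : Iso n →* (E n ≃ₗᵢ[ℝ] E n) where
  toFun g := g.A
  map_one' := rfl
  map_mul' _ _ := rfl

/-- The point group of `Γ`: the group of linear parts of elements of `Γ`. -/
def pointGroup {n : ℕ} (Γ : Subgroup (Iso n)) : Subgroup (E n ≃ₗᵢ[ℝ] E n) :=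
  Γ.map (AHom n)

end Iso

/-!
The heart of the matter is Bieberbach's first theorem: the translations of a crystallographic group
`Γ` span the whole space. Granting it, let `g = a + A ∈ N` with `A` fixing `V = Span(N)` pointwise.
For a translation `b + I ∈ Γ`, normality puts the commutator of `g` and `b + I`, which is the
translation by `A b - b`, into `N`; so `A b - b ∈ V`, while `A b - b ∈ Vᗮ` because `A` is orthogonal
and fixes `V`. Hence `A` fixes every translation vector of `Γ`, and `A = I`. The other claims are
formal.

For Bieberbach's theorem, first let `G` be discrete and cocompact without nontrivial translations.
Compactness of `O(n)` gives `u ∈ G`, `u ≠ 1`, whose rotation `B` is close to `I`; `B - I` is then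
bounded below, by `δ > 0` say, on the subspace `W` it moves. Cocompactness gives elements `γ` with
small rotation and arbitrarily large translation part lying mostly in `W`. Commuting such a `γ` with
`u` divides its rotation by `50` and shrinks its translation by a factor in `[δ / 4, 1 / 2]`,
keeping it mostly in `W`; iterating, one lands in a fixed window `[δ T / 4, T]` with arbitrarily
small rotation. The window holds finitely many elements of `G`, so one of them has rotation `I`: a
nontrivial translation. In general, project `G` to the isometries of the orthogonal complement of
the span of its translations; as these form a lattice in their span, the image is again discrete, so
it contains a nontrivial translation, the image of some `g ∈ G`. The rotation of `g` permutes the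
finitely many short lattice vectors, so some `g ^ p` is a translation of `G`; it projects to zero, a
contradiction.
-/

-- `Iso n` for an arbitrary inner product space: the proof also needs isometries of subspaces.
@[ext] structure AIso (F : Type*) [NormedAddCommGroup F] [InnerProductSpace ℝ F] where
  a : F
  A : F ≃ₗᵢ[ℝ] F

namespace AIso

variable {F : Type*} [NormedAddCommGroup F] [InnerProductSpace ℝ F]

instance : Mul (AIso F) := ⟨fun x y => ⟨x.a + x.A y.a, x.A * y.A⟩⟩
instance : One (AIso F) := ⟨⟨0, 1⟩⟩
instance : Inv (AIso F) := ⟨fun x => ⟨-(x.A⁻¹ x.a), x.A⁻¹⟩⟩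

@[simp] lemma mul_a (x y : AIso F) : (x * y).a = x.a + x.A y.a := rfl
@[simp] lemma mul_A (x y : AIso F) : (x * y).A = x.A * y.A := rfl
@[simp] lemma one_a : (1 : AIso F).a = 0 := rfl
@[simp] lemma one_A : (1 : AIso F).A = 1 := rfl
@[simp] lemma inv_a (x : AIso F) : x⁻¹.a = -(x.A⁻¹ x.a) := rfl
@[simp] lemma inv_A (x : AIso F) : x⁻¹.A = x.A⁻¹ := rfl

instance : Group (AIso F) where
  mul_assoc x y z := AIso.ext (by simp [add_assoc]) (mul_assoc _ _ _)
  one_mul x := AIso.ext (by simp) (one_mul _)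
  mul_one x := AIso.ext (by simp) (mul_one _)
  inv_mul_cancel x := AIso.ext (by simp) (inv_mul_cancel _)

def linearHom : AIso F →* (F ≃ₗᵢ[ℝ] F) where
  toFun g := g.A
  map_one' := rfl
  map_mul' _ _ := rfl

@[simp] lemma linearHom_apply (g : AIso F) : linearHom g = g.A := rfl

def act (g : AIso F) (x : F) : F := g.a + g.A x

def trans (a : F) : AIso F := ⟨a, 1⟩

@[simp] lemma trans_a (a : F) : (trans a).a = a := rfl
@[simp] lemma trans_A (a : F) : (trans a).A = 1 := rfl

lemma eq_trans_of_A_eq_one {g : AIso F} (h : g.A = 1) : g = trans g.a := AIso.ext rfl h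

lemma trans_add (a b : F) : trans (a + b) = trans a * trans b := AIso.ext (by simp) (by simp)

lemma trans_neg (a : F) : trans (-a) = (trans a)⁻¹ := AIso.ext (by simp) (by simp)

lemma trans_nsmul (n : ℕ) (a : F) : trans (n • a) = trans a ^ n := by
  induction n with
  | zero => exact AIso.ext (by simp) rfl
  | succ n ih => rw [succ_nsmul, trans_add, ih, pow_succ]

lemma conj_trans (g : AIso F) (b : F) : g * trans b * g⁻¹ = trans (g.A b) :=
  AIso.ext (by simp) (by simp)

def IsDiscrete (G : Subgroup (AIso F)) : Prop :=
  ∀ r : ℝ, {g | g ∈ G ∧ ‖g.a‖ ≤ r}.Finite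

def IsCocompact (G : Subgroup (AIso F)) : Prop :=
  ∃ R : ℝ, ∀ x : F, ∃ g ∈ G, ‖g.act x‖ ≤ R

end AIso

open scoped commutatorElement

namespace LinearIsometryEquiv

variable {F : Type*} [NormedAddCommGroup F] [InnerProductSpace ℝ F]

def NearOne (A : F ≃ₗᵢ[ℝ] F) (ε : ℝ) : Prop := ∀ x, ‖A x - x‖ ≤ ε * ‖x‖

namespace NearOne

variable {A B : F ≃ₗᵢ[ℝ] F} {ε ξ : ℝ}

lemma mono (h : NearOne A ε) {ε' : ℝ} (hε : ε ≤ ε') : NearOne A ε' :=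
  fun x => (h x).trans (mul_le_mul_of_nonneg_right hε (norm_nonneg x))

lemma inv (h : NearOne A ε) : NearOne A⁻¹ ε := fun x => by
  simpa [norm_sub_rev] using h (A⁻¹ x)

lemma commutator (hA : NearOne A ξ) (hB : NearOne B ε) (hξ : 0 ≤ ξ) (hε : 0 ≤ ε) :
    NearOne ⁅A, B⁆ (2 * ξ * ε) := fun z => by
  set w := A⁻¹ (B⁻¹ z)
  have hz : z = B (A w) := by simp [w]
  have hw : ‖w‖ = ‖z‖ := by simp [w]
  have key : ⁅A, B⁆ z - z = (A (B w - w) - (B w - w)) - (B (A w - w) - (A w - w)) := by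
    rw [hz]; simp [commutatorElement_def, w, map_sub]; abel
  calc ‖⁅A, B⁆ z - z‖ ≤ ξ * ‖B w - w‖ + ε * ‖A w - w‖ := by
        rw [key]; exact (norm_sub_le _ _).trans (add_le_add (hA _) (hB _))
    _ ≤ ξ * (ε * ‖w‖) + ε * (ξ * ‖w‖) := by gcongr; exacts [hB w, hA w]
    _ = 2 * ξ * ε * ‖z‖ := by rw [hw]; ring

end NearOne

lemma nearOne_iff_opNorm_le {A : F ≃ₗᵢ[ℝ] F} {ε : ℝ} (hε : 0 ≤ ε) :
    NearOne A ε ↔ ‖(A : F →L[ℝ] F) - 1‖ ≤ ε :=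
  ⟨fun h => ContinuousLinearMap.opNorm_le_bound _ hε fun x => by simpa using h x,
    fun h x => by simpa using ((A : F →L[ℝ] F) - 1).le_of_opNorm_le h x⟩

lemma one_mem_of_forall_nearOne {S : Set (F ≃ₗᵢ[ℝ] F)} (hS : S.Finite)
    (h : ∀ ε > 0, ∃ A ∈ S, NearOne A ε) : 1 ∈ S := by
  set d : (F ≃ₗᵢ[ℝ] F) → ℝ := fun A => ‖(A : F →L[ℝ] F) - 1‖
  have hzero : (0 : ℝ) ∈ d '' S := by
    refine (hS.image d).isClosed.closure_subset (Metric.mem_closure_iff.2 fun ε hε => ?_)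
    obtain ⟨A, hA, hAε⟩ := h (ε / 2) (half_pos hε)
    have := (nearOne_iff_opNorm_le (half_pos hε).le).1 hAε
    exact ⟨d A, ⟨A, hA, rfl⟩, by rw [dist_zero_left, Real.norm_of_nonneg (norm_nonneg _)]; linarith⟩
  obtain ⟨A, hA, hdA⟩ := hzero
  convert hA
  ext x
  symm
  simpa [sub_eq_zero] using (nearOne_iff_opNorm_le le_rfl).2 hdA.le x

lemma exists_pow_apply_eq_of_mapsTo (A : F ≃ₗᵢ[ℝ] F) {s : Set F}
    (hs : s.Finite) (h : Set.MapsTo A s s) : ∃ p > 0, ∀ x ∈ s, (A ^ p) x = x := by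
  have hmaps : ∀ n : ℕ, Set.MapsTo ⇑(A ^ n) s s := fun n => by
    induction n with
    | zero => exact Set.mapsTo_id s
    | succ n ih => rw [pow_succ]; exact ih.comp h
  have := hs.to_subtype
  obtain ⟨i, j, hij, heq⟩ := Finite.exists_ne_map_eq_of_infinite fun n : ℕ => (hmaps n).restrict
  wlog hlt : i < j generalizing i j
  · exact this j i hij.symm heq.symm (lt_of_le_of_ne (not_lt.1 hlt) hij.symm)
  refine ⟨j - i, by omega, fun x hx => (A ^ i).injective ?_⟩
  have := congrArg Subtype.val (congrFun heq ⟨x, hx⟩)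
  simp only [Set.MapsTo.val_restrict_apply] at this
  rw [this, ← Function.comp_apply (f := ⇑(A ^ i)), ← coe_mul, ← pow_add,
    Nat.add_sub_cancel' hlt.le]

lemma apply_eq_self_of_mem_span (A : F ≃ₗᵢ[ℝ] F) {s : Set F} (h : ∀ x ∈ s, A x = x) {v : F}
    (hv : v ∈ Submodule.span ℝ s) : A v = v :=
  LinearMap.eqOn_span (f := A.toLinearEquiv.toLinearMap) (g := LinearMap.id) h hv

variable [FiniteDimensional ℝ F]

lemma exists_infinite_nearOne (H : ℕ → F ≃ₗᵢ[ℝ] F) {η : ℝ} (hη : 0 < η) :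
    ∃ k₀, {k | NearOne ((H k)⁻¹ * H k₀) η}.Infinite := by
  have hball : ∀ k, (H k : F →L[ℝ] F) ∈ Metric.closedBall 0 1 := fun k => by
    simpa using ContinuousLinearMap.opNorm_le_bound _ zero_le_one fun x => by simp
  obtain ⟨a, -, φ, hφ, hlim⟩ := (isCompact_closedBall (0 : F →L[ℝ] F) 1).tendsto_subseq hball
  obtain ⟨N, hN⟩ := Metric.tendsto_atTop.1 hlim (η / 2) (half_pos hη)
  simp only [Function.comp_apply] at hN
  refine ⟨φ N, ((Set.Ici_infinite N).image hφ.injective.injOn).mono ?_⟩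
  rintro _ ⟨n, hn, rfl⟩ x
  have hclose : ‖(H (φ n) : F →L[ℝ] F) - H (φ N)‖ ≤ η := by
    rw [← dist_eq_norm]
    linarith [dist_triangle_right ((H (φ n) : F →L[ℝ] F)) (H (φ N)) a, hN n hn, hN N le_rfl]
  calc ‖((H (φ n))⁻¹ * H (φ N)) x - x‖ = ‖H (φ N) x - H (φ n) x‖ := by
        rw [← (H (φ n)).norm_map]; simp
    _ ≤ η * ‖x‖ := by
        rw [norm_sub_rev]
        exact ((H (φ n) : F →L[ℝ] F) - H (φ N)).le_of_opNorm_le hclose x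

end LinearIsometryEquiv

section Expanding

variable {F : Type*} [NormedAddCommGroup F] [InnerProductSpace ℝ F] [FiniteDimensional ℝ F]

structure IsExpanding (B : F ≃ₗᵢ[ℝ] F) (W : Submodule ℝ F) (δ : ℝ) : Prop where
  pos : 0 < δ
  le : δ ≤ 1 / 100
  nearOne : B.NearOne (1 / 100)
  sub_mem : ∀ y, B y - y ∈ W
  le_norm_sub : ∀ y, δ * ‖W.starProjection y‖ ≤ ‖B y - y‖

lemma exists_isExpanding {B : F ≃ₗᵢ[ℝ] F} (hB : B.NearOne (1 / 100)) (hB1 : B ≠ 1) :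
    ∃ W δ, IsExpanding B W δ ∧ W ≠ ⊥ := by
  set K := LinearMap.ker ((B : F →ₗ[ℝ] F) - LinearMap.id)
  have hK : ∀ v ∈ K, B v = v := fun v hv => by simpa [K, sub_eq_zero] using hv
  have hsub : ∀ y, B y - y = B (Kᗮ.starProjection y) - Kᗮ.starProjection y := fun y => by
    conv_lhs => rw [← K.starProjection_add_starProjection_orthogonal y]
    rw [_root_.map_add, hK _ (K.starProjection_apply_mem y)]; abel
  -- `B - 1` is injective on `Kᗮ`, hence bounded below there
  set f : Kᗮ →ₗ[ℝ] F := ((B : F →ₗ[ℝ] F) - LinearMap.id) ∘ₗ Kᗮ.subtype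
  have hf : LinearMap.ker f = ⊥ := by
    refine LinearMap.ker_eq_bot'.2 fun w hw => Subtype.ext ?_
    have hwK : (w : F) ∈ K := by simpa [K, f] using hw
    simpa using K.orthogonal_disjoint.le_bot ⟨hwK, w.2⟩
  obtain ⟨c, hc, hcf⟩ := antilipschitzWith_iff_exists_mul_le_norm.1
    ((f.exists_antilipschitzWith hf).imp fun _ h => h.2)
  refine ⟨Kᗮ, min c (1 / 100), ⟨lt_min hc (by norm_num), min_le_right _ _, hB, fun y => ?_,
    fun y => ?_⟩, fun h => hB1 ?_⟩
  · rw [hsub]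
    refine Kᗮ.sub_mem ((K.mem_orthogonal _).2 fun v hv => ?_) (Kᗮ.starProjection_apply_mem y)
    rw [← hK v hv, B.inner_map_map]
    exact (K.mem_orthogonal _).1 (Kᗮ.starProjection_apply_mem y) v hv
  · rw [hsub]
    calc min c (1 / 100) * ‖Kᗮ.starProjection y‖ ≤ c * ‖Kᗮ.starProjection y‖ := by
          gcongr; exact min_le_left _ _
      _ ≤ _ := by simpa [f] using hcf ⟨_, Kᗮ.starProjection_apply_mem y⟩
  · ext x
    exact hK x (Submodule.orthogonal_eq_bot_iff.1 h ▸ Submodule.mem_top)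

end Expanding

namespace AIso

open scoped commutatorElement

variable {F : Type*} [NormedAddCommGroup F] [InnerProductSpace ℝ F]

lemma norm_commutator_a_add_le {γ : AIso F} {ξ : ℝ} (hγ : γ.A.NearOne ξ) (u : AIso F) :
    ‖⁅γ, u⁆.a + (u.A (γ.A⁻¹ γ.a) - γ.A⁻¹ γ.a)‖ ≤
      ξ * (‖u.A (γ.A⁻¹ γ.a) - γ.A⁻¹ γ.a‖ + ‖u.a‖) := by
  set X := γ.A
  set B := u.A
  set y := X⁻¹ γ.a
  set w := B⁻¹ u.a
  have hc : γ.a = X y := by simp [y]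
  have hb : u.a = B w := by simp [w]
  have key : ⁅γ, u⁆.a + (B y - y) = -(X (B y - y) - (B y - y)) + X (B (w - X⁻¹ w)) := by
    simp only [commutatorElement_def, mul_a, inv_a, mul_A, LinearIsometryEquiv.coe_mul,
      LinearIsometryEquiv.coe_inv, Function.comp_apply, map_neg, map_sub]
    rw [hc, hb]
    simp [X, B, y, w]
    abel
  have hw : ‖X (B (w - X⁻¹ w))‖ ≤ ξ * ‖u.a‖ := by
    rw [X.norm_map, B.norm_map, norm_sub_rev, hb, B.norm_map]
    exact hγ.inv w
  rw [key, mul_add]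
  exact (norm_add_le _ _).trans (add_le_add (by rw [norm_neg]; exact hγ _) hw)

end AIso

lemma Submodule.norm_le_two_mul_norm_starProjection {F : Type*} [NormedAddCommGroup F]
    [InnerProductSpace ℝ F] {W : Submodule ℝ F} [W.HasOrthogonalProjection] {v t : F}
    (ht : t ∈ W) (h : 3 * ‖v - t‖ ≤ ‖t‖) : ‖v‖ ≤ 2 * ‖W.starProjection v‖ := by
  have h1 : ‖W.starProjection v - t‖ ≤ ‖v - t‖ := by
    simpa [map_sub, W.starProjection_eq_self_iff.2 ht] using W.norm_starProjection_apply_le (v - t)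
  linarith [norm_sub_norm_le t (W.starProjection v), norm_sub_rev t (W.starProjection v),
    norm_sub_norm_le v t]

lemma Subgroup.commutatorElement_mem {G : Type*} [Group G] (H : Subgroup G) {g h : G}
    (hg : g ∈ H) (hh : h ∈ H) : ⁅g, h⁆ ∈ H := by
  rw [commutatorElement_def]
  exact mul_mem (mul_mem (mul_mem hg hh) (inv_mem hg)) (inv_mem hh)

namespace IsExpanding

open scoped commutatorElement

variable {F : Type*} [NormedAddCommGroup F] [InnerProductSpace ℝ F] [FiniteDimensional ℝ F]
  {u : AIso F} {W : Submodule ℝ F} {δ : ℝ}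

structure Admissible (W : Submodule ℝ F) (δ ξ : ℝ) (γ : AIso F) : Prop where
  nonneg : 0 ≤ ξ
  le : ξ ≤ δ ^ 2 / 100
  nearOne : γ.A.NearOne ξ
  norm_le : ‖γ.a‖ ≤ 2 * ‖W.starProjection γ.a‖

lemma commutator_step (hu : IsExpanding u.A W δ) {γ : AIso F} {ξ : ℝ}
    (hγ : Admissible W δ ξ γ) (hγu : 100 * (‖u.a‖ + 1) ≤ δ * ‖γ.a‖) :
    Admissible W δ (ξ / 50) ⁅γ, u⁆ ∧ δ / 4 * ‖γ.a‖ ≤ ‖⁅γ, u⁆.a‖ ∧ ‖⁅γ, u⁆.a‖ ≤ ‖γ.a‖ / 2 := by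
  obtain ⟨hξ0, hξ, hγA, hγW⟩ := hγ
  have hrot : ⁅γ, u⁆.A.NearOne (ξ / 50) :=
    (hγA.commutator hu.nearOne hξ0 (by norm_num)).mono (by linarith)
  set c := γ.a
  set y := γ.A⁻¹ c
  set z := u.A y - y
  have hy : ‖y‖ = ‖c‖ := γ.A⁻¹.norm_map c
  have herr : ‖⁅γ, u⁆.a - -z‖ ≤ ξ * (‖z‖ + ‖u.a‖) := by
    rw [sub_neg_eq_add]; exact AIso.norm_commutator_a_add_le hγA u
  have hz : ‖z‖ ≤ ‖c‖ / 100 := by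
    have := hu.nearOne y
    rwa [hy, one_div_mul_eq_div] at this
  -- `y` is close to `c`, so its projection to `W`, and hence `z`, is large
  have hyc : ‖W.starProjection c‖ - ξ * ‖c‖ ≤ ‖W.starProjection y‖ := by
    have h1 : ‖c - y‖ ≤ ξ * ‖c‖ := by simpa [hy, y] using hγA y
    have h2 := W.norm_starProjection_apply_le (c - y)
    rw [map_sub] at h2
    linarith [norm_sub_norm_le (W.starProjection c) (W.starProjection y)]
  have hzy : δ * ‖W.starProjection y‖ ≤ ‖z‖ := hu.le_norm_sub y
  have hδ := hu.pos
  have hc := norm_nonneg c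
  have hδc0 := mul_nonneg hδ.le hc
  have hδc : δ * ‖c‖ ≤ ‖c‖ / 100 := by nlinarith [hu.le]
  have hξ' : ξ ≤ δ / 10000 := by nlinarith [hu.le]
  have hZ : 49 / 100 * (δ * ‖c‖) ≤ ‖z‖ := by
    have hpy : 49 / 100 * ‖c‖ ≤ ‖W.starProjection y‖ := by nlinarith
    nlinarith
  have he : ‖⁅γ, u⁆.a - -z‖ ≤ δ * ‖c‖ / 500000 := by
    calc ‖⁅γ, u⁆.a - -z‖ ≤ δ / 10000 * (‖c‖ / 50) := herr.trans (by gcongr; linarith)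
      _ = δ * ‖c‖ / 500000 := by ring
  refine ⟨⟨by positivity, by linarith, hrot, W.norm_le_two_mul_norm_starProjection
    (W.neg_mem (hu.sub_mem y)) (by rw [norm_neg]; linarith)⟩, ?_, ?_⟩
  · linarith [norm_sub_norm_le (-z) ⁅γ, u⁆.a, norm_sub_rev (-z) ⁅γ, u⁆.a, norm_neg z]
  · linarith [norm_sub_norm_le ⁅γ, u⁆.a (-z), norm_neg z]

variable {G : Subgroup (AIso F)} {T : ℝ}

lemma exists_mem_window (hu : IsExpanding u.A W δ) (huG : u ∈ G)
    (hT : 100 * (‖u.a‖ + 1) ≤ δ * T) {ξ : ℝ} {γ : AIso F} (hγG : γ ∈ G)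
    (hγ : Admissible W δ ξ γ) (hγT : δ / 4 * T ≤ ‖γ.a‖) :
    ∃ ω ∈ G, ω.A.NearOne ξ ∧ δ / 4 * T ≤ ‖ω.a‖ ∧ ‖ω.a‖ ≤ T := by
  have hT0 : 0 < T := pos_of_mul_pos_right (by linarith [norm_nonneg u.a]) hu.pos.le
  obtain ⟨j, hj⟩ := pow_unbounded_of_one_lt (‖γ.a‖ / T) one_lt_two
  rw [div_lt_iff₀ hT0] at hj
  induction j generalizing ξ γ with
  | zero => exact ⟨γ, hγG, hγ.nearOne, hγT, by linarith⟩
  | succ j ih =>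
    by_cases hγT' : ‖γ.a‖ ≤ T
    · exact ⟨γ, hγG, hγ.nearOne, hγT, hγT'⟩
    obtain ⟨hγ', hlow, hup⟩ :=
      hu.commutator_step hγ (hT.trans (mul_le_mul_of_nonneg_left (not_le.1 hγT').le hu.pos.le))
    obtain ⟨ω, hωG, hω, hωT⟩ := ih (G.commutatorElement_mem hγG huG) hγ'
      (by nlinarith [hu.pos]) (by rw [pow_succ] at hj; linarith)
    exact ⟨ω, hωG, hω.mono (by linarith [hγ.nonneg]), hωT⟩

/-- Starting far enough out, the descent takes at least `m` steps before reaching the window. -/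
lemma exists_mem_window_nearOne_div_pow (hu : IsExpanding u.A W δ) (huG : u ∈ G)
    (hT : 100 * (‖u.a‖ + 1) ≤ δ * T) (m : ℕ) {ξ : ℝ} {γ : AIso F} (hγG : γ ∈ G)
    (hγ : Admissible W δ ξ γ) (hγT : T * (4 / δ) ^ m ≤ ‖γ.a‖) :
    ∃ ω ∈ G, ω.A.NearOne (ξ / 50 ^ m) ∧ δ / 4 * T ≤ ‖ω.a‖ ∧ ‖ω.a‖ ≤ T := by
  have hδ := hu.pos
  have hT0 : 0 < T := pos_of_mul_pos_right (by linarith [norm_nonneg u.a]) hδ.le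
  have h4δ : 1 ≤ 4 / δ := by rw [le_div_iff₀ hδ]; linarith [hu.le]
  induction m generalizing ξ γ with
  | zero =>
    rw [pow_zero, div_one]
    rw [pow_zero, mul_one] at hγT
    exact hu.exists_mem_window huG hT hγG hγ (by nlinarith [hu.le])
  | succ m ih =>
    have hγT1 : T ≤ ‖γ.a‖ := le_trans (le_mul_of_one_le_right hT0.le (one_le_pow₀ h4δ)) hγT
    obtain ⟨hγ', hlow, -⟩ :=
      hu.commutator_step hγ (hT.trans (mul_le_mul_of_nonneg_left hγT1 hδ.le))
    have hγ'T : T * (4 / δ) ^ m ≤ ‖⁅γ, u⁆.a‖ := by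
      refine le_trans ?_ hlow
      have h1 : δ / 4 * (4 / δ) = 1 := by field_simp
      calc T * (4 / δ) ^ m = T * (4 / δ) ^ m * (δ / 4 * (4 / δ)) := by rw [h1, mul_one]
        _ = δ / 4 * (T * (4 / δ) ^ (m + 1)) := by ring
        _ ≤ δ / 4 * ‖γ.a‖ := by gcongr
    obtain ⟨ω, hωG, hω, hωT⟩ := ih (G.commutatorElement_mem hγG huG) hγ' hγ'T
    exact ⟨ω, hωG, by rwa [pow_succ', ← div_div], hωT⟩

end IsExpanding

namespace AIso

variable {F : Type*} [NormedAddCommGroup F] [InnerProductSpace ℝ F] [FiniteDimensional ℝ F]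
  {G : Subgroup (AIso F)}

lemma IsCocompact.exists_nearOne_near_smul (hG : IsCocompact G) (e : F) {η : ℝ} (hη : 0 < η) :
    ∃ C, ∀ M : ℝ, ∃ γ ∈ G, ∃ k : ℝ, M ≤ k ∧ γ.A.NearOne η ∧ ‖γ.a - k • e‖ ≤ C := by
  obtain ⟨R, hR⟩ := hG
  choose h hhG hhR using fun k : ℕ => hR ((k : ℝ) • e)
  obtain ⟨k₀, hk₀⟩ := LinearIsometryEquiv.exists_infinite_nearOne (fun k => (h k).A) hη
  -- `h k` brings `k • e` back into the ball of radius `R`, hence so does `(h k)⁻¹ * h k₀`, up to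
  -- the constant `‖(h k₀).a‖`
  refine ⟨‖(h k₀).a‖ + R, fun M => ?_⟩
  obtain ⟨k, hk, hkM⟩ := hk₀.exists_gt ⌈M⌉₊
  refine ⟨(h k)⁻¹ * h k₀, mul_mem (inv_mem (hhG k)) (hhG k₀), k,
    (Nat.le_ceil M).trans (by exact_mod_cast hkM.le), hk, ?_⟩
  have key : ((h k)⁻¹ * h k₀).a - (k : ℝ) • e = (h k).A⁻¹ ((h k₀).a - (h k).act ((k : ℝ) • e)) := by
    simp [act, map_sub]
    abel
  rw [key, LinearIsometryEquiv.norm_map]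
  exact (norm_sub_le _ _).trans (by linarith [hhR k])

lemma IsCocompact.exists_ne_one_nearOne [Nontrivial F] (hG : IsCocompact G) {η : ℝ} (hη : 0 < η) :
    ∃ u ∈ G, u ≠ 1 ∧ u.A.NearOne η := by
  obtain ⟨e, he⟩ := exists_ne (0 : F)
  obtain ⟨C, hC⟩ := hG.exists_nearOne_near_smul e hη
  obtain ⟨γ, hγG, k, hk, hγ, hγC⟩ := hC ((C + 1) / ‖e‖)
  refine ⟨γ, hγG, fun h1 => ?_, hγ⟩
  rw [h1, one_a, zero_sub, norm_neg, norm_smul] at hγC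
  rw [div_le_iff₀ (norm_pos_iff.2 he)] at hk
  linarith [mul_le_mul_of_nonneg_right (Real.le_norm_self k) (norm_nonneg e)]

lemma IsCocompact.exists_admissible (hG : IsCocompact G) {W : Submodule ℝ F} (hW : W ≠ ⊥)
    {δ ξ : ℝ} (hξ0 : 0 < ξ) (hξ : ξ ≤ δ ^ 2 / 100) (M : ℝ) :
    ∃ γ ∈ G, IsExpanding.Admissible W δ ξ γ ∧ M ≤ ‖γ.a‖ := by
  obtain ⟨e, heW, he⟩ := W.ne_bot_iff.1 hW
  have he0 := norm_pos_iff.2 he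
  obtain ⟨C, hC⟩ := hG.exists_nearOne_near_smul e hξ0
  obtain ⟨γ, hγG, k, hk, hγ, hγC⟩ := hC ((3 * C + |M|) / ‖e‖)
  have hC0 : 0 ≤ C := (norm_nonneg _).trans hγC
  rw [div_le_iff₀ he0] at hk
  have hke : ‖k • e‖ = k * ‖e‖ := by
    rw [norm_smul, Real.norm_of_nonneg
      ((mul_nonneg_iff_of_pos_right he0).1 (by linarith [abs_nonneg M]))]
  refine ⟨γ, hγG, ⟨hξ0.le, hξ, hγ, ?_⟩, ?_⟩
  · exact Submodule.norm_le_two_mul_norm_starProjection (W.smul_mem k heW)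
      (by linarith [abs_nonneg M])
  · linarith [norm_sub_norm_le (k • e) γ.a, norm_sub_rev (k • e) γ.a, le_abs_self M]

theorem IsDiscrete.exists_translation [Nontrivial F] (hd : IsDiscrete G) (hc : IsCocompact G) :
    ∃ g ∈ G, g.A = 1 ∧ g.a ≠ 0 := by
  by_contra! htr
  obtain ⟨u, huG, hu1, hu⟩ := hc.exists_ne_one_nearOne (η := 1 / 100) (by norm_num)
  obtain ⟨W, δ, hW, hW0⟩ := exists_isExpanding hu fun h => hu1 (AIso.ext (htr u huG h) h)
  have hδ := hW.pos
  set T := 100 * (‖u.a‖ + 1) / δ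
  have hT0 : 0 < T := by positivity
  have hT : 100 * (‖u.a‖ + 1) ≤ δ * T := by rw [mul_div_cancel₀ _ hδ.ne']
  set S := {g | g ∈ G ∧ ‖g.a‖ ≤ T ∧ δ / 4 * T ≤ ‖g.a‖}
  have hS : (AIso.A '' S).Finite := ((hd T).subset fun g hg => ⟨hg.1, hg.2.1⟩).image _
  have hsmall : ∀ ε > 0, ∃ B ∈ AIso.A '' S, B.NearOne ε := by
    intro ε hε
    obtain ⟨m, hm⟩ := pow_unbounded_of_one_lt (δ ^ 2 / 100 / ε) (by norm_num : (1 : ℝ) < 50)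
    obtain ⟨γ, hγG, hγ, hγT⟩ := hc.exists_admissible hW0 (by positivity) le_rfl (T * (4 / δ) ^ m)
    obtain ⟨ω, hωG, hω, hωT⟩ := hW.exists_mem_window_nearOne_div_pow huG hT m hγG hγ hγT
    refine ⟨ω.A, ⟨ω, ⟨hωG, hωT.2, hωT.1⟩, rfl⟩, hω.mono ?_⟩
    rw [div_lt_iff₀ hε] at hm
    rw [div_le_iff₀ (by positivity)]
    linarith
  obtain ⟨g, ⟨hgG, -, hgT⟩, hg1⟩ := LinearIsometryEquiv.one_mem_of_forall_nearOne hS hsmall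
  rw [htr g hgG hg1, norm_zero] at hgT
  linarith [mul_pos (div_pos hδ four_pos) hT0]

end AIso

section Lattice

variable {F : Type*} [NormedAddCommGroup F] [InnerProductSpace ℝ F] [FiniteDimensional ℝ F]

lemma AddSubgroup.exists_finset_span_eq (L : AddSubgroup F) :
    ∃ b : Finset F, ↑b ⊆ (L : Set F) ∧ Submodule.span ℝ ↑b = Submodule.span ℝ (L : Set F) := by
  obtain ⟨b, hbL, hbspan, hb⟩ := exists_linearIndependent ℝ (L : Set F)
  exact ⟨hb.setFinite.toFinset, by simpa using hbL, by simpa using hbspan⟩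

lemma AddSubgroup.exists_norm_sub_le (L : AddSubgroup F) :
    ∃ C, ∀ v ∈ Submodule.span ℝ (L : Set F), ∃ l ∈ L, ‖v - l‖ ≤ C := by
  obtain ⟨b, hbL, hbspan⟩ := L.exists_finset_span_eq
  refine ⟨∑ x ∈ b, ‖x‖, fun v hv => ?_⟩
  rw [← hbspan, Submodule.mem_span_finset] at hv
  obtain ⟨f, -, rfl⟩ := hv
  refine ⟨∑ x ∈ b, ⌊f x⌋ • x, L.sum_mem fun x hx => L.zsmul_mem (hbL hx) _, ?_⟩
  rw [← Finset.sum_sub_distrib]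
  refine (norm_sum_le _ _).trans (Finset.sum_le_sum fun x _ => ?_)
  rw [← Int.cast_smul_eq_zsmul ℝ, ← sub_smul, Int.self_sub_floor, norm_smul,
    Real.norm_of_nonneg (Int.fract_nonneg _)]
  exact mul_le_of_le_one_left (norm_nonneg x) (Int.fract_lt_one _).le

lemma AddSubgroup.exists_span_norm_le_eq (L : AddSubgroup F) :
    ∃ C, Submodule.span ℝ {l | l ∈ L ∧ ‖l‖ ≤ C} = Submodule.span ℝ (L : Set F) := by
  obtain ⟨b, hbL, hbspan⟩ := L.exists_finset_span_eq
  refine ⟨∑ x ∈ b, ‖x‖, le_antisymm (Submodule.span_mono fun l hl => hl.1) ?_⟩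
  rw [← hbspan]
  exact Submodule.span_mono fun x hx =>
    ⟨hbL hx, Finset.single_le_sum (f := fun x => ‖x‖) (fun _ _ => norm_nonneg _) hx⟩

end Lattice

lemma Submodule.starProjection_apply_of_map_eq {F : Type*} [NormedAddCommGroup F]
    [InnerProductSpace ℝ F] {K : Submodule ℝ F} [K.HasOrthogonalProjection] {A : F ≃ₗᵢ[ℝ] F}
    (h : K.map (A.toLinearEquiv : F →ₗ[ℝ] F) = K) (x : F) :
    K.starProjection (A x) = A (K.starProjection x) := by
  have := Submodule.starProjection_map_apply A K (A x)
  simp only [h, LinearIsometryEquiv.symm_apply_apply] at this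
  exact this

namespace AIso

variable {F : Type*} [NormedAddCommGroup F] [InnerProductSpace ℝ F] {G : Subgroup (AIso F)}

variable (G) in
def translationVectors : AddSubgroup F where
  carrier := {a | trans a ∈ G}
  add_mem' {a b} ha hb := by
    simpa only [Set.mem_ofPred_eq, trans_add] using mul_mem ha hb
  zero_mem' := G.one_mem
  neg_mem' {a} ha := by
    simpa only [Set.mem_ofPred_eq, trans_neg] using inv_mem ha

lemma mem_translationVectors {a : F} : a ∈ translationVectors G ↔ trans a ∈ G := Iff.rfl

variable (G) in
def translationSpan : Submodule ℝ F := Submodule.span ℝ (translationVectors G : Set F)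

lemma A_mem_translationVectors {g : AIso F} (hg : g ∈ G) {a : F}
    (ha : a ∈ translationVectors G) : g.A a ∈ translationVectors G := by
  rw [mem_translationVectors, ← conj_trans]
  exact mul_mem (mul_mem hg ha) (inv_mem hg)

lemma map_translationSpan {g : AIso F} (hg : g ∈ G) :
    (translationSpan G).map (g.A.toLinearEquiv : F →ₗ[ℝ] F) = translationSpan G := by
  rw [translationSpan, Submodule.map_span]
  congr 1
  refine Set.Subset.antisymm ?_ fun a ha => ⟨g.A⁻¹ a, ?_, by simp⟩
  · rintro _ ⟨a, ha, rfl⟩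
    exact A_mem_translationVectors hg ha
  · exact A_mem_translationVectors (inv_mem hg) ha

lemma map_orthogonal_translationSpan {g : AIso F} (hg : g ∈ G) :
    (translationSpan G)ᗮ.map (g.A.toLinearEquiv : F →ₗ[ℝ] F) = (translationSpan G)ᗮ := by
  rw [Submodule.map_orthogonal_equiv, map_translationSpan hg]

section projHom

variable (W : Submodule ℝ F) [W.HasOrthogonalProjection]
  (hW : ∀ g ∈ G, W.map (g.A.toLinearEquiv : F →ₗ[ℝ] F) = W)

/-- The action induced on `F ⧸ Wᗮ ≅ W`. -/
def projHom : G →* AIso W where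
  toFun g := ⟨W.orthogonalProjectionOnto (g : AIso F).a,
    ((g : AIso F).A.submoduleMap W).trans (LinearIsometryEquiv.ofEq _ _ (hW g g.2))⟩
  map_one' := AIso.ext (by simp) (by ext; rfl)
  map_mul' g h := AIso.ext (Subtype.ext (by
    simp [Submodule.starProjection_apply_of_map_eq (hW g g.2)]; rfl)) (by ext; rfl)

@[simp] lemma coe_projHom_a (g : G) : ((projHom W hW g).a : F) = W.starProjection (g : AIso F).a :=
  rfl

@[simp] lemma coe_projHom_A_apply (g : G) (x : W) : ((projHom W hW g).A x : F) = (g : AIso F).A x :=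
  rfl

lemma IsCocompact.range_projHom (hc : IsCocompact G) : IsCocompact (projHom W hW).range := by
  obtain ⟨R, hR⟩ := hc
  refine ⟨R, fun y => ?_⟩
  obtain ⟨g, hgG, hgR⟩ := hR y
  refine ⟨projHom W hW ⟨g, hgG⟩, ⟨_, rfl⟩, le_trans (le_of_eq ?_)
    ((W.norm_starProjection_apply_le (g.act y)).trans hgR)⟩
  have hy : g.A y ∈ W := ((projHom W hW ⟨g, hgG⟩).A y).2
  rw [← Submodule.norm_coe]
  simp [act, W.starProjection_eq_self_iff.2 hy]

end projHom

lemma projHom_eq_one_of_A_eq_one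
    (hW : ∀ g ∈ G, (translationSpan G)ᗮ.map (g.A.toLinearEquiv : F →ₗ[ℝ] F) = (translationSpan G)ᗮ)
    [(translationSpan G)ᗮ.HasOrthogonalProjection] {g : G} (hg : (g : AIso F).A = 1) :
    projHom (translationSpan G)ᗮ hW g = 1 := by
  refine AIso.ext (Subtype.ext ?_) (by ext x; rw [coe_projHom_A_apply, hg]; rfl)
  have hmem : (g : AIso F).a ∈ translationVectors G := by
    rw [mem_translationVectors, ← eq_trans_of_A_eq_one hg]; exact g.2
  rw [coe_projHom_a, one_a, ZeroMemClass.coe_zero, Submodule.starProjection_apply_eq_zero_iff]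
  exact Submodule.le_orthogonal_orthogonal _ (Submodule.subset_span hmem)

lemma A_eq_one_of_forall_apply_eq {N : Subgroup (AIso F)} (hG : translationSpan G = ⊤)
    (hN : ∀ g ∈ G, ∀ x ∈ N, g * x * g⁻¹ ∈ N) {g : AIso F} (hg : g ∈ N)
    (hfix : ∀ v ∈ translationSpan N, g.A v = v) : g.A = 1 := by
  set V := translationSpan N
  have hb : ∀ b ∈ translationVectors G, g.A b = b := by
    intro b hb
    have hmemN : g.A b - b ∈ translationVectors N := by
      rw [mem_translationVectors, sub_eq_add_neg, trans_add, trans_neg, ← conj_trans]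
      simpa only [mul_assoc] using mul_mem hg (hN _ hb _ (inv_mem hg))
    have hperp : g.A b - b ∈ Vᗮ := (V.mem_orthogonal _).2 fun v hv => by
      rw [inner_sub_right, ← g.A.inner_map_map v b, hfix v hv, sub_self]
    simpa [sub_eq_zero] using V.orthogonal_disjoint.le_bot ⟨Submodule.subset_span hmemN, hperp⟩
  ext x
  exact g.A.apply_eq_self_of_mem_span hb (show x ∈ translationSpan G from hG ▸ Submodule.mem_top)

end AIso

namespace AIso

variable {F : Type*} [NormedAddCommGroup F] [InnerProductSpace ℝ F] [FiniteDimensional ℝ F]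
  {G : Subgroup (AIso F)}

/-- Multiplying by a translation of `G`, the translation part of any element can be made at most
that of its projection plus a constant. -/
lemma IsDiscrete.range_projHom (hd : IsDiscrete G) :
    IsDiscrete (projHom (translationSpan G)ᗮ fun _ => map_orthogonal_translationSpan).range := by
  set V := translationSpan G
  intro r
  obtain ⟨C, hC⟩ := (translationVectors G).exists_norm_sub_le
  refine (((hd (r + C)).preimage Subtype.val_injective.injOn).image
    (projHom Vᗮ fun _ => map_orthogonal_translationSpan)).subset ?_
  rintro _ ⟨⟨g, rfl⟩, hgr⟩
  obtain ⟨l, hlL, hl⟩ := hC _ (V.starProjection_apply_mem (g : AIso F).a)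
  have hl' : trans (-l) ∈ G := (translationVectors G).neg_mem hlL
  refine ⟨⟨trans (-l), hl'⟩ * g, ⟨mul_mem hl' g.2, ?_⟩, ?_⟩
  · have hdec : (trans (-l) * (g : AIso F)).a =
        (V.starProjection (g : AIso F).a - l) + Vᗮ.starProjection (g : AIso F).a := by
      rw [mul_a, Submodule.starProjection_orthogonal_val]; simp; abel
    rw [← Submodule.norm_coe, coe_projHom_a] at hgr
    rw [Subgroup.coe_mul, hdec]
    linarith [norm_add_le (V.starProjection (g : AIso F).a - l) (Vᗮ.starProjection (g : AIso F).a)]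
  · rw [map_mul, projHom_eq_one_of_A_eq_one _ rfl, one_mul]

lemma IsDiscrete.exists_pow_A_eq_one (hd : IsDiscrete G) {g : AIso F} (hg : g ∈ G)
    (hfix : ∀ w ∈ (translationSpan G)ᗮ, g.A w = w) : ∃ p > 0, g.A ^ p = 1 := by
  set V := translationSpan G
  obtain ⟨C, hC⟩ := (translationVectors G).exists_span_norm_le_eq
  set s := {l | l ∈ translationVectors G ∧ ‖l‖ ≤ C}
  have hs : s.Finite := ((hd C).image AIso.a).subset fun l hl => ⟨trans l, hl, rfl⟩
  obtain ⟨p, hp, hps⟩ := g.A.exists_pow_apply_eq_of_mapsTo hs fun l hl =>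
    ⟨A_mem_translationVectors hg hl.1, by rw [LinearIsometryEquiv.norm_map]; exact hl.2⟩
  have hV : ∀ v ∈ V, (g.A ^ p) v = v := fun v hv =>
    (g.A ^ p).apply_eq_self_of_mem_span hps (by rwa [hC])
  have hW : ∀ n : ℕ, ∀ w ∈ Vᗮ, (g.A ^ n) w = w := fun n w hw => by
    induction n with
    | zero => rfl
    | succ n ih => rw [pow_succ, LinearIsometryEquiv.coe_mul, Function.comp_apply, hfix w hw, ih]
  refine ⟨p, hp, LinearIsometryEquiv.ext fun x => ?_⟩
  rw [← V.starProjection_add_starProjection_orthogonal x, map_add,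
    hW p _ (Vᗮ.starProjection_apply_mem x), hV _ (V.starProjection_apply_mem x)]
  rfl

/-- Bieberbach's first theorem. -/
theorem IsDiscrete.translationSpan_eq_top (hd : IsDiscrete G) (hc : IsCocompact G) :
    translationSpan G = ⊤ := by
  by_contra hV
  set V := translationSpan G
  have hW : ∀ g ∈ G, Vᗮ.map (g.A.toLinearEquiv : F →ₗ[ℝ] F) = Vᗮ :=
    fun _ => map_orthogonal_translationSpan
  have : Nontrivial Vᗮ := Submodule.nontrivial_iff_ne_bot.2
    (mt Submodule.orthogonal_eq_bot_iff.1 hV)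
  obtain ⟨_, ⟨g, rfl⟩, hgA, hga⟩ := hd.range_projHom.exists_translation (hc.range_projHom Vᗮ hW)
  have hfix : ∀ w ∈ Vᗮ, (g : AIso F).A w = w := fun w hw => by
    simpa using congrArg Subtype.val (LinearIsometryEquiv.ext_iff.1 hgA ⟨w, hw⟩)
  obtain ⟨p, hp, hgp⟩ := hd.exists_pow_A_eq_one g.2 hfix
  have hgpA : ((g : AIso F) ^ p).A = 1 := by rw [← linearHom_apply, map_pow, linearHom_apply, hgp]
  have h1 := projHom_eq_one_of_A_eq_one hW (g := g ^ p) (by rwa [Subgroup.coe_pow])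
  rw [map_pow, eq_trans_of_A_eq_one hgA, ← trans_nsmul] at h1
  have h2 : (p : ℝ) • (projHom Vᗮ hW g).a = 0 := by
    rw [Nat.cast_smul_eq_nsmul]; exact congrArg AIso.a h1
  exact hga ((smul_eq_zero.1 h2).resolve_left (Nat.cast_ne_zero.2 hp.ne'))

end AIso

namespace Iso

variable {n : ℕ}

def toAIso : Iso n ≃* AIso (E n) where
  toFun g := ⟨g.a, g.A⟩
  invFun g := ⟨g.a, g.A⟩
  left_inv _ := rfl
  right_inv _ := rfl
  map_mul' _ _ := rfl

abbrev toSubgroup (S : Subgroup (Iso n)) : Subgroup (AIso (E n)) := S.map toAIso.toMonoidHom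

lemma mem_toSubgroup {S : Subgroup (Iso n)} {g : Iso n} : toAIso g ∈ toSubgroup S ↔ g ∈ S := by
  simp

lemma translationSpan_toSubgroup (S : Subgroup (Iso n)) :
    AIso.translationSpan (toSubgroup S) = spanS (S : Set (Iso n)) := by
  rw [AIso.translationSpan, spanS]
  congr 1
  ext a
  exact mem_toSubgroup (g := Iso.trans a)

lemma IsCrystallographic.isDiscrete {Γ : Subgroup (Iso n)} (hΓ : IsCrystallographic Γ) :
    AIso.IsDiscrete (toSubgroup Γ) := by
  intro r
  refine ((hΓ.1 _ (isCompact_closedBall 0 r)).image toAIso).subset ?_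
  rintro g ⟨hg, hgr⟩
  refine ⟨toAIso.symm g, ⟨Subgroup.mem_map_equiv.1 hg, g.a, ⟨0, ?_, ?_⟩, ?_⟩, by simp⟩
  · simpa using (norm_nonneg _).trans hgr
  · simp [act, toAIso]
  · simpa [toAIso] using hgr

lemma IsCrystallographic.isCocompact {Γ : Subgroup (Iso n)} (hΓ : IsCrystallographic Γ) :
    AIso.IsCocompact (toSubgroup Γ) := by
  obtain ⟨K, hK, hKΓ⟩ := hΓ.2
  obtain ⟨R, hR⟩ := hK.isBounded.subset_closedBall 0
  refine ⟨R, fun x => ?_⟩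
  obtain ⟨g, hg, hgK⟩ := hKΓ x
  exact ⟨toAIso g, mem_toSubgroup.2 hg, show ‖g.act x‖ ≤ R by simpa using hR hgK⟩

theorem A_eq_refl_of_forall_apply_eq {Γ N : Subgroup (Iso n)} (hΓ : IsCrystallographic Γ)
    (hN : IsNormalIn N Γ) {g : Iso n} (hg : g ∈ N)
    (hfix : ∀ v ∈ spanS (N : Set (Iso n)), g.A v = v) : g.A = LinearIsometryEquiv.refl ℝ (E n) := by
  have hspan := hΓ.isDiscrete.translationSpan_eq_top hΓ.isCocompact
  refine AIso.A_eq_one_of_forall_apply_eq (g := toAIso g) hspan ?_ (mem_toSubgroup.2 hg)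
    (by rwa [translationSpan_toSubgroup])
  intro γ hγ x hx
  rw [← toAIso.apply_symm_apply γ, ← toAIso.apply_symm_apply x, ← map_inv, ← map_mul, ← map_mul]
  exact mem_toSubgroup.2 (hN.2 _ (Subgroup.mem_map_equiv.1 hγ) _ (Subgroup.mem_map_equiv.1 hx))

end Iso

/-- Let `Γ` be a crystallographic group with translation group `T` and
point group `Π`, and let `N` be a normal subgroup of `Γ`. Then: the group of translations
of `N` (the elements of `N` acting as translations on `Span(N)`) is `N ∩ T`; the point
group of `N` (acting on `Span(N)` by restriction) is isomorphic to
`Φ = {A ∈ Π : a+A ∈ N for some a}` (the set of linear parts of `N`, the restriction to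
`Span(N)` being injective on it); and `Φ` is a normal subgroup of `Π`. -/
theorem stmt16 {n : ℕ} (Γ N : Subgroup (Iso n)) (hΓ : Iso.IsCrystallographic Γ)
    (hN : Iso.IsNormalIn N Γ) :
    ({g : Iso n | g ∈ N ∧ ∃ c : E n, ∀ v ∈ Iso.spanS (N : Set (Iso n)), g.act v = c + v}
        = {g : Iso n | g ∈ N ∧ g ∈ Iso.translations n}) ∧
    ((Iso.pointGroup N : Set (E n ≃ₗᵢ[ℝ] E n))
        = {A : E n ≃ₗᵢ[ℝ] E n | ∃ a : E n, (⟨a, A⟩ : Iso n) ∈ N}) ∧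
    (∀ g ∈ N, ∀ h ∈ N,
        (∀ v ∈ Iso.spanS (N : Set (Iso n)), g.A v = h.A v) → g.A = h.A) ∧
    (∀ Pg ∈ Iso.pointGroup Γ, ∀ A ∈ Iso.pointGroup N,
        Pg * A * Pg⁻¹ ∈ Iso.pointGroup N) := by
  refine ⟨?_, ?_, fun g hg h hh hgh => ?_, ?_⟩
  · ext g
    refine ⟨fun ⟨hgN, c, hc⟩ => ⟨hgN, Iso.A_eq_refl_of_forall_apply_eq hΓ hN hgN fun v hv => ?_⟩,
      fun ⟨hgN, hgT⟩ => ⟨hgN, g.a, fun v _ => by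
        rw [Iso.act, show g.A = LinearIsometryEquiv.refl ℝ (E n) from hgT]; rfl⟩⟩
    have hc0 := hc 0 (Submodule.zero_mem _)
    simp only [Iso.act, map_zero, add_zero] at hc0
    simpa [Iso.act, hc0] using hc v hv
  · ext A
    exact ⟨fun ⟨g, hg, hgA⟩ => ⟨g.a, hgA ▸ hg⟩, fun ⟨a, ha⟩ => ⟨_, ha, rfl⟩⟩
  · have := Iso.A_eq_refl_of_forall_apply_eq hΓ hN (mul_mem (inv_mem hg) hh) fun v hv => by
      simp [← hgh v hv]
    refine LinearIsometryEquiv.ext fun x => ?_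
    simpa using (congrArg (fun B => g.A (B x)) this).symm
  · rintro _ ⟨γ, hγ, rfl⟩ _ ⟨ν, hν, rfl⟩
    exact ⟨γ * ν * γ⁻¹, hN.2 γ hγ ν hν, by simp⟩
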